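/- arXiv:2109.02256 — 2 statements merged into one kernel-verified Lean document; each statement's English description precedes it below -/
import Mathlib

section
/- Let x₁, …, x_N be as in the periodic setting, solving the Euler–Lagrange system with zero potential gradient, and assume r ↦ G'(r) r² is nondecreasing on (0, ∞). Then for every p with 0 ≤ p < ∞ and every t ∈ [0, T], Σ_{i=1}^{N} (Rᵢ(t))^p ≤ (Σ_{i=1}^{N} (Rᵢ(0))^p)^{1 − t/T} · (Σ_{i=1}^{N} (Rᵢ(T))^p)^{t/T}; that is, t ↦ Σ_{i=1}^{N} (Rᵢ(t))^p is logarithmically convex on [0, T]. -/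
/-!
Write `z_i = N (x_i - x_{i-1}) = R_i⁻¹` and `S = ∑ z_i ^ q` with `q = -p ≤ 0`. Then
`S'' = q (q - 1) ∑ z_i ^ (q - 2) ż_i ^ 2 + q ∑ z_i ^ (q - 1) z̈_i`, and by Cauchy–Schwarz
`S'^2 = q² (∑ z_i ^ (q - 1) ż_i)^2 ≤ q² S ∑ z_i ^ (q - 2) ż_i ^ 2 ≤ q (q - 1) S ∑ z_i ^ (q - 2) ż_i ^ 2`.
So `S'^2 ≤ S'' S`, i.e. `log S` is convex, as soon as `∑ R_i ^ (p + 1) (ẍ_i - ẍ_{i-1}) ≤ 0`.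
Summation by parts over one period rewrites this sum as `∑ (R_i ^ (p + 1) - R_{i+1} ^ (p + 1)) ẍ_i`,
and every term is `≤ 0`: since `L'' > 0` and `r ↦ G'(r) r²` is monotone, the Euler–Lagrange
equation gives `ẍ_i` the sign of `R_{i+1} - R_i`.
-/

open Set Finset

/-- Discrete density `Rᵢ(t) = δ/(xᵢ(t) − x_{i−1}(t))`, `δ = 1/N`, periodic indexing by `ℤ`. -/
noncomputable def Rd (N : ℕ) (x : ℤ → ℝ → ℝ) (i : ℤ) (t : ℝ) : ℝ :=
  ((1 : ℝ) / N) / (x i t - x (i - 1) t)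

open Real

lemma le_rpow_mul_rpow_of_convexOn_log {f : ℝ → ℝ} {T t : ℝ} (hT : 0 < T)
    (hf : ∀ s ∈ Icc 0 T, 0 < f s) (hconv : ConvexOn ℝ (Icc 0 T) fun s => log (f s))
    (ht : t ∈ Icc 0 T) : f t ≤ f 0 ^ (1 - t / T) * f T ^ (t / T) := by
  have hθ1 : t / T ≤ 1 := (div_le_one hT).2 ht.2
  have key := hconv.2 (left_mem_Icc.2 hT.le) (right_mem_Icc.2 hT.le) (sub_nonneg.2 hθ1)
    (div_nonneg ht.1 hT.le) (by ring)
  have ht_eq : (1 - t / T) • (0 : ℝ) + (t / T) • T = t := by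
    simp only [smul_eq_mul]
    field_simp
    ring
  rw [ht_eq] at key
  simp only [smul_eq_mul] at key
  calc f t = exp (log (f t)) := (exp_log (hf t ht)).symm
    _ ≤ exp ((1 - t / T) * log (f 0) + t / T * log (f T)) := exp_le_exp.2 key
    _ = f 0 ^ (1 - t / T) * f T ^ (t / T) := by
      rw [exp_add, rpow_def_of_pos (hf 0 (left_mem_Icc.2 hT.le)),
        rpow_def_of_pos (hf T (right_mem_Icc.2 hT.le)), mul_comm (log (f 0)),
        mul_comm (log (f T))]

lemma convexOn_log_of_sq_deriv_le {f f' f'' : ℝ → ℝ} {a b : ℝ}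
    (hf : ∀ t ∈ Icc a b, 0 < f t)
    (hf' : ∀ t ∈ Icc a b, HasDerivAt f (f' t) t)
    (hf'' : ∀ t ∈ Icc a b, HasDerivAt f' (f'' t) t)
    (hsq : ∀ t ∈ Icc a b, f' t ^ 2 ≤ f'' t * f t) :
    ConvexOn ℝ (Icc a b) fun t => log (f t) := by
  refine convexOn_of_hasDerivWithinAt2_nonneg (convex_Icc a b) (f' := fun t => f' t / f t)
    (f'' := fun t => (f'' t * f t - f' t * f' t) / f t ^ 2)
    (fun t ht => ((hf' t ht).continuousAt.log (hf t ht).ne').continuousWithinAt) ?_ ?_ ?_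
  all_goals
    rw [interior_Icc]
    intro t ht
    replace ht := Ioo_subset_Icc_self ht
  · exact ((hf' t ht).log (hf t ht).ne').hasDerivWithinAt
  · exact ((hf'' t ht).div (hf' t ht) (hf t ht).ne').hasDerivWithinAt
  · exact div_nonneg (by nlinarith [hsq t ht]) (sq_nonneg _)

lemma sq_sum_deriv_rpow_le {ι : Type*} (s : Finset ι) {q : ℝ} (hq : q ≤ 0) {z v w : ι → ℝ}
    (hz : ∀ i ∈ s, 0 < z i) (hw : ∑ i ∈ s, z i ^ (q - 1) * w i ≤ 0) :
    (∑ i ∈ s, q * z i ^ (q - 1) * v i) ^ 2 ≤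
      (∑ i ∈ s, q * ((q - 1) * z i ^ (q - 2) * v i ^ 2 + z i ^ (q - 1) * w i)) *
        ∑ i ∈ s, z i ^ q := by
  set V := ∑ i ∈ s, z i ^ (q - 2) * v i ^ 2
  have hV : 0 ≤ V := sum_nonneg fun i hi => mul_nonneg (rpow_nonneg (hz i hi).le _) (sq_nonneg _)
  have hS : 0 ≤ ∑ i ∈ s, z i ^ q := sum_nonneg fun i hi => rpow_nonneg (hz i hi).le _
  -- Cauchy–Schwarz after splitting `z ^ (q - 1) = z ^ (q / 2) * z ^ (q / 2 - 1)`
  have hCS : (∑ i ∈ s, z i ^ (q - 1) * v i) ^ 2 ≤ (∑ i ∈ s, z i ^ q) * V := by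
    have hsq : ∀ i ∈ s, ∀ r : ℝ, (z i ^ r) ^ 2 = z i ^ (2 * r) := fun i hi r => by
      rw [← rpow_natCast, ← rpow_mul (hz i hi).le, mul_comm]; norm_num
    have e1 : ∑ i ∈ s, z i ^ (q - 1) * v i = ∑ i ∈ s, z i ^ (q / 2) * (z i ^ (q / 2 - 1) * v i) :=
      sum_congr rfl fun i hi => by rw [← mul_assoc, ← rpow_add (hz i hi)]; ring_nf
    have e2 : ∑ i ∈ s, z i ^ q = ∑ i ∈ s, (z i ^ (q / 2)) ^ 2 :=
      sum_congr rfl fun i hi => by rw [hsq i hi]; ring_nf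
    have e3 : V = ∑ i ∈ s, (z i ^ (q / 2 - 1) * v i) ^ 2 :=
      sum_congr rfl fun i hi => by rw [mul_pow, hsq i hi]; ring_nf
    rw [e1, e2, e3]
    exact sum_mul_sq_le_sq_mul_sq _ _ _
  have hS2 : q * (q - 1) * V + q * ∑ i ∈ s, z i ^ (q - 1) * w i =
      ∑ i ∈ s, q * ((q - 1) * z i ^ (q - 2) * v i ^ 2 + z i ^ (q - 1) * w i) := by
    simp only [V, mul_sum, ← sum_add_distrib]
    exact sum_congr rfl fun i _ => by ring
  have hS1 : (∑ i ∈ s, q * z i ^ (q - 1) * v i) = q * ∑ i ∈ s, z i ^ (q - 1) * v i := by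
    simp only [mul_sum, mul_assoc]
  rw [← hS2, hS1]
  have : q ^ 2 * V ≤ q * (q - 1) * V + q * ∑ i ∈ s, z i ^ (q - 1) * w i := by
    nlinarith [mul_nonneg_of_nonpos_of_nonpos hq hw]
  calc (q * ∑ i ∈ s, z i ^ (q - 1) * v i) ^ 2
      = q ^ 2 * (∑ i ∈ s, z i ^ (q - 1) * v i) ^ 2 := by ring
    _ ≤ q ^ 2 * ((∑ i ∈ s, z i ^ q) * V) := by gcongr
    _ = (q ^ 2 * V) * ∑ i ∈ s, z i ^ q := by ring
    _ ≤ _ := by gcongr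

lemma convexOn_log_sum_rpow {ι : Type*} {s : Finset ι} (hs : s.Nonempty) {a b q : ℝ}
    (hq : q ≤ 0) {z z' z'' : ι → ℝ → ℝ}
    (hz : ∀ i ∈ s, ∀ t ∈ Icc a b, 0 < z i t)
    (hz' : ∀ i ∈ s, ∀ t ∈ Icc a b, HasDerivAt (z i) (z' i t) t)
    (hz'' : ∀ i ∈ s, ∀ t ∈ Icc a b, HasDerivAt (z' i) (z'' i t) t)
    (hdiss : ∀ t ∈ Icc a b, ∑ i ∈ s, z i t ^ (q - 1) * z'' i t ≤ 0) :
    ConvexOn ℝ (Icc a b) fun t => log (∑ i ∈ s, z i t ^ q) := by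
  refine convexOn_log_of_sq_deriv_le (f' := fun t => ∑ i ∈ s, q * z i t ^ (q - 1) * z' i t)
    (f'' := fun t => ∑ i ∈ s, q * ((q - 1) * z i t ^ (q - 2) * z' i t ^ 2
      + z i t ^ (q - 1) * z'' i t))
    (fun t ht => sum_pos (fun i hi => rpow_pos_of_pos (hz i hi t ht) q) hs) ?_ ?_
    (fun t ht => sq_sum_deriv_rpow_le s hq (fun i hi => hz i hi t ht) (hdiss t ht))
  · intro t ht
    refine HasDerivAt.fun_sum fun i hi => ?_
    exact ((hz' i hi t ht).rpow_const (Or.inl (hz i hi t ht).ne')).congr_deriv (by ring)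
  · intro t ht
    refine HasDerivAt.fun_sum fun i hi => ?_
    have hpow := (hz' i hi t ht).rpow_const (p := q - 1) (Or.inl (hz i hi t ht).ne')
    refine ((hpow.const_mul q).mul (hz'' i hi t ht)).congr_deriv ?_
    rw [show q - 1 - 1 = q - 2 by ring]
    ring

lemma ContDiff.hasDerivAt_deriv {f : ℝ → ℝ} (hf : ContDiff ℝ 2 f) (t : ℝ) :
    HasDerivAt (deriv f) (deriv (deriv f) t) t :=
  ((contDiff_succ_iff_deriv (n := 1)).1 hf).2.2.differentiable one_ne_zero t |>.hasDerivAt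

lemma Finset.sum_Icc_one_sub_one {M : Type*} [AddCancelCommMonoid M] (h : ℤ → M) (N : ℕ)
    (h0 : h 0 = h N) : ∑ i ∈ Finset.Icc (1 : ℤ) N, h (i - 1) = ∑ i ∈ Finset.Icc (1 : ℤ) N, h i := by
  have hN : (0 : ℤ) ≤ N := N.cast_nonneg
  have hshift : ∑ i ∈ Finset.Icc (1 : ℤ) N, h (i - 1) = ∑ i ∈ Finset.Ico (0 : ℤ) N, h i := by
    rw [← Finset.Ico_add_one_right_eq_Icc]
    simpa [sub_eq_add_neg] using Finset.sum_Ico_add' h 1 (N + 1) (-1)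
  have hIoc : Finset.Icc (1 : ℤ) N = Finset.Ioc (0 : ℤ) N := by ext; simp; omega
  apply add_right_cancel (b := h N)
  rw [hshift, Finset.sum_Ico_add_eq_sum_Icc hN, hIoc, add_comm, ← h0,
    Finset.add_sum_Ioc_eq_sum_Icc hN]

section DiscreteDensity

variable {N : ℕ} {x : ℤ → ℝ → ℝ}

lemma Rd_eq_inv (i : ℤ) (t : ℝ) :
    Rd N x i t = (N * (x i t - x (i - 1) t))⁻¹ := by
  rw [Rd, div_div, one_div]

lemma Rd_pos (hN : 0 < N) {i : ℤ} {t : ℝ} (h : x (i - 1) t < x i t) : 0 < Rd N x i t :=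
  div_pos (by positivity) (sub_pos.2 h)

lemma Rd_add_natCast (hper : ∀ i t, x (i + N) t = x i t + 1) (i : ℤ) (t : ℝ) :
    Rd N x (i + N) t = Rd N x i t := by
  rw [Rd, Rd, hper, show i + N - 1 = i - 1 + N by ring, hper, add_sub_add_right_eq_sub]

lemma deriv_deriv_add_natCast (hper : ∀ i t, x (i + N) t = x i t + 1) (i : ℤ) :
    deriv (deriv (x (i + N))) = deriv (deriv (x i)) := by
  rw [show x (i + N) = fun t => x i t + 1 from funext (hper i), deriv_add_const']

lemma sub_rpow_mul_nonpos_of_monotoneOn {B : ℝ → ℝ} (hB : MonotoneOn B (Ioi 0))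
    {r r' q k c a : ℝ} (hr : 0 < r) (hr' : 0 < r') (hq : 0 ≤ q) (hk : 0 < k) (hc : 0 ≤ c)
    (ha : k * a = c * (B r' - B r)) : (r ^ q - r' ^ q) * a ≤ 0 := by
  rcases le_total r r' with h | h
  · have : 0 ≤ k * a := ha ▸ mul_nonneg hc (sub_nonneg.2 (hB hr hr' h))
    exact mul_nonpos_of_nonpos_of_nonneg (sub_nonpos.2 (rpow_le_rpow hr.le h hq))
      ((mul_nonneg_iff_of_pos_left hk).1 this)
  · have : k * a ≤ 0 := ha ▸ mul_nonpos_of_nonneg_of_nonpos hc (sub_nonpos.2 (hB hr' hr h))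
    exact mul_nonpos_of_nonneg_of_nonpos (sub_nonneg.2 (rpow_le_rpow hr'.le h hq))
      (nonpos_of_mul_nonpos_right this hk)

lemma sum_Rd_rpow_mul_sub_nonpos (hper : ∀ i t, x (i + N) t = x i t + 1) {L G : ℝ → ℝ}
    (hL'' : ∀ u, 0 < deriv (deriv L) u)
    (hB : MonotoneOn (fun r => deriv G r * r ^ 2) (Ioi 0)) {q t : ℝ} (hq : 0 ≤ q)
    (hR : ∀ i, 0 < Rd N x i t)
    (hEL : ∀ i, deriv (deriv L) (deriv (x i) t) * deriv (deriv (x i)) t =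
        N * (deriv G (Rd N x (i + 1) t) * (Rd N x (i + 1) t) ^ 2
          - deriv G (Rd N x i t) * (Rd N x i t) ^ 2)) :
    ∑ i ∈ Finset.Icc (1 : ℤ) N,
      Rd N x i t ^ q * (deriv (deriv (x i)) t - deriv (deriv (x (i - 1))) t) ≤ 0 := by
  have hsbp : ∑ i ∈ Finset.Icc (1 : ℤ) N, Rd N x i t ^ q * deriv (deriv (x (i - 1))) t =
      ∑ i ∈ Finset.Icc (1 : ℤ) N, Rd N x (i + 1) t ^ q * deriv (deriv (x i)) t := by
    have hshift := Finset.sum_Icc_one_sub_one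
      (fun i => Rd N x (i + 1) t ^ q * deriv (deriv (x i)) t) N ?_
    · simpa only [sub_add_cancel] using hshift
    rw [add_comm (N : ℤ), Rd_add_natCast hper, ← zero_add (N : ℤ),
      deriv_deriv_add_natCast hper, zero_add]
  calc ∑ i ∈ Finset.Icc (1 : ℤ) N,
        Rd N x i t ^ q * (deriv (deriv (x i)) t - deriv (deriv (x (i - 1))) t)
      = ∑ i ∈ Finset.Icc (1 : ℤ) N,
          (Rd N x i t ^ q - Rd N x (i + 1) t ^ q) * deriv (deriv (x i)) t := by
        simp only [mul_sub, sub_mul, sum_sub_distrib, hsbp]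
    _ ≤ 0 := sum_nonpos fun i _ => sub_rpow_mul_nonpos_of_monotoneOn hB (hR i) (hR (i + 1)) hq
        (hL'' _) N.cast_nonneg (hEL i)

lemma convexOn_log_sum_Rd_rpow (hN : 0 < N) {T : ℝ} (hper : ∀ i t, x (i + N) t = x i t + 1)
    (hx : ∀ i, ContDiff ℝ 2 (x i)) (hord : ∀ i, ∀ t ∈ Icc (0 : ℝ) T, x i t < x (i + 1) t)
    {L G : ℝ → ℝ} (hL'' : ∀ u, 0 < deriv (deriv L) u)
    (hB : MonotoneOn (fun r => deriv G r * r ^ 2) (Ioi 0))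
    (hEL : ∀ i, ∀ t ∈ Icc (0 : ℝ) T,
      deriv (deriv L) (deriv (x i) t) * deriv (deriv (x i)) t =
        N * (deriv G (Rd N x (i + 1) t) * (Rd N x (i + 1) t) ^ 2
          - deriv G (Rd N x i t) * (Rd N x i t) ^ 2))
    {p : ℝ} (hp : 0 ≤ p) :
    ConvexOn ℝ (Icc 0 T) fun t => log (∑ i ∈ Finset.Icc (1 : ℤ) N, Rd N x i t ^ p) := by
  have hN0 : (0 : ℝ) < N := Nat.cast_pos.2 hN
  set z : ℤ → ℝ → ℝ := fun i t => N * (x i t - x (i - 1) t)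
  have hz : ∀ i, ∀ t ∈ Icc 0 T, 0 < z i t := fun i t ht =>
    mul_pos hN0 (sub_pos.2 (by simpa using hord (i - 1) t ht))
  have hRz : ∀ i, ∀ t ∈ Icc 0 T, ∀ q : ℝ, Rd N x i t ^ q = z i t ^ (-q) := fun i t ht q => by
    rw [Rd_eq_inv, inv_rpow (hz i t ht).le, rpow_neg (hz i t ht).le]
  have hdiss : ∀ t ∈ Icc 0 T, ∑ i ∈ Finset.Icc (1 : ℤ) N,
      z i t ^ (-p - 1) * (N * (deriv (deriv (x i)) t - deriv (deriv (x (i - 1))) t)) ≤ 0 := by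
    intro t ht
    have h := sum_Rd_rpow_mul_sub_nonpos hper hL'' hB (by linarith : 0 ≤ p + 1)
      (fun i => Rd_pos hN (by simpa using hord (i - 1) t ht)) fun i => hEL i t ht
    rw [sum_congr rfl fun i _ => by rw [hRz i t ht, neg_add']] at h
    simp only [mul_left_comm _ (N : ℝ), ← mul_sum]
    exact mul_nonpos_of_nonneg_of_nonpos hN0.le h
  refine (convexOn_log_sum_rpow ⟨1, by simp; omega⟩ (neg_nonpos.2 hp) (fun i _ => hz i)
    (fun i _ t _ => (((hx i).differentiable two_ne_zero t).hasDerivAt.sub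
      ((hx (i - 1)).differentiable two_ne_zero t).hasDerivAt).const_mul (N : ℝ))
    (fun i _ t _ => (((hx i).hasDerivAt_deriv t).sub
      ((hx (i - 1)).hasDerivAt_deriv t)).const_mul (N : ℝ)) hdiss).congr fun t ht => ?_
  simp only [hRz _ t ht]

end DiscreteDensity

theorem stmt_3_general
    (N : ℕ) (hN : 2 ≤ N) (T : ℝ) (hT : 0 < T)
    (x : ℤ → ℝ → ℝ)
    (hper : ∀ i t, x (i + N) t = x i t + 1)
    (hx : ∀ i, ContDiff ℝ 2 (x i))
    (hord : ∀ i, ∀ t ∈ Icc (0:ℝ) T, x i t < x (i + 1) t)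
    (L : ℝ → ℝ)
    (hL'' : ∀ u, 0 < deriv (deriv L) u)
    (G : ℝ → ℝ)
    (hB : MonotoneOn (fun r => deriv G r * r ^ 2) (Ioi 0))
    (hEL : ∀ i, ∀ t ∈ Icc (0:ℝ) T,
      deriv (deriv L) (deriv (x i) t) * deriv (deriv (x i)) t =
        N * (deriv G (Rd N x (i + 1) t) * (Rd N x (i + 1) t) ^ 2
          - deriv G (Rd N x i t) * (Rd N x i t) ^ 2)) :
    ∀ p : ℝ, 0 ≤ p → ∀ t ∈ Icc (0:ℝ) T,
      ∑ i ∈ Finset.Icc (1:ℤ) (N:ℤ), (Rd N x i t) ^ p ≤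
        (∑ i ∈ Finset.Icc (1:ℤ) (N:ℤ), (Rd N x i 0) ^ p) ^ (1 - t / T) *
          (∑ i ∈ Finset.Icc (1:ℤ) (N:ℤ), (Rd N x i T) ^ p) ^ (t / T) := by
  intro p hp t ht
  have hR : ∀ i, ∀ s ∈ Icc 0 T, 0 < Rd N x i s := fun i s hs =>
    Rd_pos (by omega) (by simpa using hord (i - 1) s hs)
  exact le_rpow_mul_rpow_of_convexOn_log hT
    (fun s hs => sum_pos (fun i _ => rpow_pos_of_pos (hR i s hs) p) ⟨1, by simp; omega⟩)
    (convexOn_log_sum_Rd_rpow (by omega) hper hx hord hL'' hB hEL hp) ht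

/-- Logarithmic convexity of `t ↦ Σᵢ Rᵢ(t)^p` along solutions of the periodic
Euler–Lagrange system with zero potential gradient, for every `0 ≤ p < ∞`. -/
theorem stmt_3
    (N : ℕ) (hN : 2 ≤ N) (T : ℝ) (hT : 0 < T)
    (x : ℤ → ℝ → ℝ)
    (hper : ∀ i t, x (i + N) t = x i t + 1)
    (hx : ∀ i, ContDiff ℝ 2 (x i))
    (hord : ∀ i, ∀ t ∈ Icc (0:ℝ) T, x i t < x (i + 1) t)
    (L : ℝ → ℝ) (hL : ContDiff ℝ 2 L)
    (hL'' : ∀ u, 0 < deriv (deriv L) u)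
    (G : ℝ → ℝ) (hG : ContDiffOn ℝ 1 G (Ioi 0))
    (hB : MonotoneOn (fun r => deriv G r * r ^ 2) (Ioi 0))
    (hEL : ∀ i, ∀ t ∈ Icc (0:ℝ) T,
      deriv (deriv L) (deriv (x i) t) * deriv (deriv (x i)) t =
        N * (deriv G (Rd N x (i + 1) t) * (Rd N x (i + 1) t) ^ 2
          - deriv G (Rd N x i t) * (Rd N x i t) ^ 2)) :
    ∀ p : ℝ, 0 ≤ p → ∀ t ∈ Icc (0:ℝ) T,
      ∑ i ∈ Finset.Icc (1:ℤ) (N:ℤ), (Rd N x i t) ^ p ≤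
        (∑ i ∈ Finset.Icc (1:ℤ) (N:ℤ), (Rd N x i 0) ^ p) ^ (1 - t / T) *
          (∑ i ∈ Finset.Icc (1:ℤ) (N:ℤ), (Rd N x i T) ^ p) ^ (t / T) :=
  stmt_3_general N hN T hT x hper hx hord L hL'' G hB hEL
end

section
/- Let x₁, …, x_N be as in the periodic setting, solving the Euler–Lagrange system with zero potential gradient, and assume r ↦ G'(r) r² is nondecreasing on (0, ∞). Then for every p ∈ [1, ∞) and every t ∈ [0, T], Σ_{i=1}^{N} (Rᵢ(t))^p (xᵢ(t) − x_{i−1}(t)) ≤ max{ Σ_{i=1}^{N} (Rᵢ(0))^p (xᵢ(0) − x_{i−1}(0)), Σ_{i=1}^{N} (Rᵢ(T))^p (xᵢ(T) − x_{i−1}(T)) }; that is, the L^p-norm of the discrete particle density at any time is controlled by its values at the initial and terminal times, uniformly in t. -/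
/-!
For `p ≥ 1` one has `Σᵢ Rᵢ^p (xᵢ − x_{i−1}) = δ^p Σᵢ Δᵢ^q` with gaps `Δᵢ = xᵢ − x_{i−1}` and
`q = 1 − p ≤ 0`, so it suffices that `E(t) = Σᵢ Δᵢ(t)^q` is convex on `[0, T]`. In `E''` the terms
`q (q − 1) Δᵢ^(q−2) Δ̇ᵢ²` are nonnegative, and summation by parts over the periodic index turns
`Σᵢ q Δᵢ^(q−1) (ẍᵢ − ẍ_{i−1})` into `Σᵢ q (Δᵢ^(q−1) − Δ_{i+1}^(q−1)) ẍᵢ`. Each of these terms is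
nonnegative: since `L'' > 0` and `r ↦ G'(r) r²` is nondecreasing while `Rᵢ = δ / Δᵢ`, the
Euler–Lagrange equation gives `ẍᵢ` the sign of `Δᵢ − Δ_{i+1}`, and `Δ ↦ q Δ^(q−1)` is nondecreasing.
-/

open Set Finset

theorem Finset.sum_Icc_one_sub_sub_one {G : Type*} [AddCommGroup G] (F : ℤ → G) (M : ℕ) :
    ∑ i ∈ Icc (1 : ℤ) M, (F i - F (i - 1)) = F M - F 0 := by
  induction M with
  | zero => simp
  | succ M ih =>
    rw [Nat.cast_succ, ← insert_Icc_sub_one_right_eq_Icc (by omega), sum_insert (by simp),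
      add_sub_cancel_right, ih]
    abel

theorem Function.Periodic.sum_Icc_one_mul_sub {R : Type*} [CommRing R] {g a : ℤ → R} {M : ℕ}
    (hg : Function.Periodic g M) (ha : Function.Periodic a M) :
    ∑ i ∈ Icc (1 : ℤ) M, g i * (a i - a (i - 1)) =
      ∑ i ∈ Icc (1 : ℤ) M, (g i - g (i + 1)) * a i := by
  have hF := sum_Icc_one_sub_sub_one (fun j => g (j + 1) * a j) M
  rw [zero_add, add_comm, hg 1, show a M = a 0 by simpa using ha 0, sub_self] at hF
  calc ∑ i ∈ Icc (1 : ℤ) M, g i * (a i - a (i - 1))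
      = ∑ i ∈ Icc (1 : ℤ) M, ((g i - g (i + 1)) * a i
          + (g (i + 1) * a i - g (i - 1 + 1) * a (i - 1))) :=
        sum_congr rfl fun i _ => by rw [sub_add_cancel]; ring
    _ = ∑ i ∈ Icc (1 : ℤ) M, (g i - g (i + 1)) * a i := by rw [sum_add_distrib, hF, add_zero]

theorem MonotoneOn.sub_mul_nonneg {R : Type*} [Ring R] [LinearOrder R] [IsStrictOrderedRing R]
    {s : Set R} {φ : R → R} (hφ : MonotoneOn φ s) {u v a : R}
    (hu : u ∈ s) (hv : v ∈ s) (ha : 0 ≤ a * (u - v)) : 0 ≤ (φ u - φ v) * a := by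
  rcases lt_trichotomy u v with huv | rfl | huv
  · exact mul_nonneg_of_nonpos_of_nonpos (sub_nonpos.2 (hφ hu hv huv.le))
      (nonpos_of_mul_nonneg_left ha (sub_neg.2 huv))
  · simp
  · exact mul_nonneg (sub_nonneg.2 (hφ hv hu huv.le)) (nonneg_of_mul_nonneg_left ha (sub_pos.2 huv))

theorem AntitoneOn.mul_sub_nonneg_of_mul_eq {R : Type*} [Ring R] [LinearOrder R]
    [IsStrictOrderedRing R] {s : Set R} {h : R → R} (hh : AntitoneOn h s) {u v a c k : R}
    (hu : u ∈ s) (hv : v ∈ s) (hc : 0 < c) (hk : 0 ≤ k)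
    (ha : c * a = k * (h v - h u)) : 0 ≤ a * (u - v) := by
  refine nonneg_of_mul_nonneg_right ?_ hc
  rw [← mul_assoc, ha, mul_assoc]
  refine mul_nonneg hk ?_
  rcases le_total u v with huv | huv
  · exact mul_nonneg_of_nonpos_of_nonpos (sub_nonpos.2 (hh hu hv huv)) (sub_nonpos.2 huv)
  · exact mul_nonneg (sub_nonneg.2 (hh hv hu huv)) (sub_nonneg.2 huv)

theorem HasDerivAt.mul_rpow_sub_one_mul {f f' : ℝ → ℝ} {f'' q t : ℝ}
    (hf : HasDerivAt f (f' t) t) (hf' : HasDerivAt f' f'' t) (ht : 0 < f t) :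
    HasDerivAt (fun s => q * f s ^ (q - 1) * f' s)
      (q * f t ^ (q - 1) * f'' + q * (q - 1) * f t ^ (q - 2) * f' t ^ 2) t := by
  refine (((hf.rpow_const (p := q - 1) (Or.inl ht.ne')).const_mul q).mul hf').congr_deriv ?_
  rw [sub_sub, one_add_one_eq_two]
  ring

theorem Real.div_rpow_mul_self {δ Δ : ℝ} (hδ : 0 ≤ δ) (hΔ : 0 < Δ) (p : ℝ) :
    (δ / Δ) ^ p * Δ = δ ^ p * Δ ^ (1 - p) := by
  rw [Real.div_rpow hδ hΔ.le, Real.rpow_sub hΔ, Real.rpow_one]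
  field_simp

def gap (x : ℤ → ℝ → ℝ) (i : ℤ) (t : ℝ) : ℝ := x i t - x (i - 1) t

section Particles

variable {N : ℕ} {x : ℤ → ℝ → ℝ}

theorem gap_add_period (hper : ∀ i t, x (i + N) t = x i t + 1) (i : ℤ) (t : ℝ) :
    gap x (i + N) t = gap x i t := by
  rw [gap, gap, hper, show i + N - 1 = i - 1 + N by ring, hper]
  ring

theorem deriv_add_period (hper : ∀ i t, x (i + N) t = x i t + 1) (i : ℤ) :
    deriv (x (i + N)) = deriv (x i) := by
  rw [show x (i + N) = fun t => x i t + 1 from funext (hper i)]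
  exact deriv_add_const' 1

theorem sum_Rd_rpow_mul_gap {t : ℝ} (hgap : ∀ i, 0 < gap x i t) (p : ℝ) :
    ∑ i ∈ Icc (1 : ℤ) N, Rd N x i t ^ p * (x i t - x (i - 1) t)
      = (1 / N : ℝ) ^ p * ∑ i ∈ Icc (1 : ℤ) N, gap x i t ^ (1 - p) := by
  rw [mul_sum]
  exact sum_congr rfl fun i _ => Real.div_rpow_mul_self (by positivity) (hgap i) p

theorem sum_mul_rpow_gap_mul_deriv_deriv_gap_nonneg {q t : ℝ} (hq : q ≤ 0)
    (hper : ∀ i t, x (i + N) t = x i t + 1) (hgap : ∀ i, 0 < gap x i t)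
    (hacc : ∀ i, 0 ≤ deriv (deriv (x i)) t * (gap x i t - gap x (i + 1) t)) :
    0 ≤ ∑ i ∈ Icc (1 : ℤ) N,
      q * gap x i t ^ (q - 1) * (deriv (deriv (x i)) t - deriv (deriv (x (i - 1))) t) := by
  have hg : Function.Periodic (fun i => q * gap x i t ^ (q - 1)) N := fun i => by
    simp only [gap_add_period hper]
  have ha : Function.Periodic (fun i => deriv (deriv (x i)) t) N := fun i => by
    simp only [deriv_add_period hper]
  have hφ : MonotoneOn (fun Δ : ℝ => q * Δ ^ (q - 1)) (Ioi 0) := fun u hu v _ huv =>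
    mul_le_mul_of_nonpos_left (Real.rpow_le_rpow_of_nonpos hu huv (by linarith)) hq
  rw [hg.sum_Icc_one_mul_sub ha]
  exact sum_nonneg fun i _ => hφ.sub_mul_nonneg (hgap i) (hgap (i + 1)) (hacc i)

theorem convexOn_sum_gap_rpow {D : Set ℝ} {q : ℝ} (hD : Convex ℝ D) (hq : q ≤ 0)
    (hper : ∀ i t, x (i + N) t = x i t + 1) (hx : ∀ i, ContDiff ℝ 2 (x i))
    (hgap : ∀ i, ∀ t ∈ D, 0 < gap x i t)
    (hacc : ∀ i, ∀ t ∈ D, 0 ≤ deriv (deriv (x i)) t * (gap x i t - gap x (i + 1) t)) :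
    ConvexOn ℝ D fun t => ∑ i ∈ Icc (1 : ℤ) N, gap x i t ^ q := by
  have hx' : ∀ i t, HasDerivAt (x i) (deriv (x i) t) t := fun i t =>
    ((hx i).differentiable (by norm_num) t).hasDerivAt
  have hx'' : ∀ i t, HasDerivAt (deriv (x i)) (deriv (deriv (x i)) t) t := fun i t =>
    (((contDiff_succ_iff_deriv (n := 1)).1 (hx i)).2.2.differentiable one_ne_zero t).hasDerivAt
  have hgap' : ∀ i t, HasDerivAt (gap x i) (deriv (x i) t - deriv (x (i - 1)) t) t :=
    fun i t => (hx' i t).sub (hx' (i - 1) t)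
  have hgap'' : ∀ i t, HasDerivAt (fun s => deriv (x i) s - deriv (x (i - 1)) s)
      (deriv (deriv (x i)) t - deriv (deriv (x (i - 1))) t) t :=
    fun i t => (hx'' i t).sub (hx'' (i - 1) t)
  refine convexOn_of_hasDerivWithinAt2_nonneg hD
    (f' := fun t => ∑ i ∈ Icc (1 : ℤ) N,
      q * gap x i t ^ (q - 1) * (deriv (x i) t - deriv (x (i - 1)) t))
    (f'' := fun t => ∑ i ∈ Icc (1 : ℤ) N,
      (q * gap x i t ^ (q - 1) * (deriv (deriv (x i)) t - deriv (deriv (x (i - 1))) t)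
        + q * (q - 1) * gap x i t ^ (q - 2) * (deriv (x i) t - deriv (x (i - 1)) t) ^ 2))
    ?_ ?_ ?_ ?_
  · exact continuousOn_finsetSum _ fun i _ =>
      (continuous_iff_continuousAt.2 fun t => (hgap' i t).continuousAt).continuousOn.rpow_const
        fun t ht => Or.inl (hgap i t ht).ne'
  · intro t ht
    refine (HasDerivAt.fun_sum fun i _ => ?_).hasDerivWithinAt
    exact ((hgap' i t).rpow_const (Or.inl (hgap i t (interior_subset ht)).ne')).congr_deriv
      (by ring)
  · intro t ht
    exact (HasDerivAt.fun_sum fun i _ =>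
      (hgap' i t).mul_rpow_sub_one_mul (f' := fun s => deriv (x i) s - deriv (x (i - 1)) s)
        (hgap'' i t) (hgap i t (interior_subset ht))).hasDerivWithinAt
  · intro t ht
    replace ht := interior_subset ht
    rw [sum_add_distrib]
    refine add_nonneg (sum_mul_rpow_gap_mul_deriv_deriv_gap_nonneg hq hper (hgap · t ht)
      (hacc · t ht)) (sum_nonneg fun i _ => ?_)
    have := hgap i t ht
    have : 0 ≤ q * (q - 1) := mul_nonneg_of_nonpos_of_nonpos hq (by linarith)
    positivity

theorem deriv_deriv_mul_gap_sub_nonneg {L G : ℝ → ℝ} {i : ℤ} {t : ℝ} (hN : 0 < N)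
    (hL'' : ∀ u, 0 < deriv (deriv L) u)
    (hB : MonotoneOn (fun r => deriv G r * r ^ 2) (Ioi 0))
    (hEL : deriv (deriv L) (deriv (x i) t) * deriv (deriv (x i)) t =
      N * (deriv G (Rd N x (i + 1) t) * Rd N x (i + 1) t ^ 2
        - deriv G (Rd N x i t) * Rd N x i t ^ 2))
    (hi : 0 < gap x i t) (hi' : 0 < gap x (i + 1) t) :
    0 ≤ deriv (deriv (x i)) t * (gap x i t - gap x (i + 1) t) := by
  have hδ : (0 : ℝ) < 1 / N := by positivity
  have hR : AntitoneOn (fun Δ : ℝ => (1 / N : ℝ) / Δ) (Ioi 0) := fun u hu v _ huv =>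
    div_le_div_of_nonneg_left hδ.le hu huv
  exact (hB.comp_AntitoneOn hR fun Δ hΔ => div_pos hδ hΔ).mul_sub_nonneg_of_mul_eq hi hi'
    (hL'' _) (Nat.cast_nonneg N) hEL

end Particles

theorem stmt_14_general
    (N : ℕ) (hN : 2 ≤ N) (T : ℝ)
    (x : ℤ → ℝ → ℝ)
    (hper : ∀ i t, x (i + N) t = x i t + 1)
    (hx : ∀ i, ContDiff ℝ 2 (x i))
    (hord : ∀ i, ∀ t ∈ Icc (0:ℝ) T, x i t < x (i + 1) t)
    (L : ℝ → ℝ)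
    (hL'' : ∀ u, 0 < deriv (deriv L) u)
    (G : ℝ → ℝ)
    (hB : MonotoneOn (fun r => deriv G r * r ^ 2) (Ioi 0))
    (hEL : ∀ i, ∀ t ∈ Icc (0:ℝ) T,
      deriv (deriv L) (deriv (x i) t) * deriv (deriv (x i)) t =
        N * (deriv G (Rd N x (i + 1) t) * (Rd N x (i + 1) t) ^ 2
          - deriv G (Rd N x i t) * (Rd N x i t) ^ 2)) :
    ∀ p : ℝ, 1 ≤ p → ∀ t ∈ Icc (0:ℝ) T,
      ∑ i ∈ Finset.Icc (1:ℤ) (N:ℤ), (Rd N x i t) ^ p * (x i t - x (i - 1) t) ≤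
        max (∑ i ∈ Finset.Icc (1:ℤ) (N:ℤ), (Rd N x i 0) ^ p * (x i 0 - x (i - 1) 0))
          (∑ i ∈ Finset.Icc (1:ℤ) (N:ℤ), (Rd N x i T) ^ p * (x i T - x (i - 1) T)) := by
  intro p hp t ht
  have hgap : ∀ i, ∀ s ∈ Icc (0 : ℝ) T, 0 < gap x i s := fun i s hs =>
    sub_pos.2 (by simpa using hord (i - 1) s hs)
  have hconv := convexOn_sum_gap_rpow (convex_Icc 0 T) (by linarith : 1 - p ≤ 0) hper hx hgap
    fun i s hs => deriv_deriv_mul_gap_sub_nonneg (by omega) hL'' hB (hEL i s hs) (hgap i s hs)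
      (hgap (i + 1) s hs)
  have h0 : (0 : ℝ) ∈ Icc 0 T := ⟨le_rfl, ht.1.trans ht.2⟩
  have hT : T ∈ Icc 0 T := ⟨ht.1.trans ht.2, le_rfl⟩
  rw [sum_Rd_rpow_mul_gap (hgap · t ht), sum_Rd_rpow_mul_gap (hgap · 0 h0),
    sum_Rd_rpow_mul_gap (hgap · T hT), ← mul_max_of_nonneg _ _ (by positivity)]
  exact mul_le_mul_of_nonneg_left
    (hconv.le_on_segment h0 hT (by rwa [segment_eq_Icc h0.2])) (by positivity)

/-- Uniform-in-time `L^p` bound for the discrete particle density: along solutions of the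
periodic Euler–Lagrange system with zero potential gradient, for every `p ∈ [1,∞)` the
quantity `Σᵢ Rᵢ(t)^p (xᵢ(t) − x_{i−1}(t))` is controlled by its initial and terminal values. -/
theorem stmt_14
    (N : ℕ) (hN : 2 ≤ N) (T : ℝ) (hT : 0 < T)
    (x : ℤ → ℝ → ℝ)
    (hper : ∀ i t, x (i + N) t = x i t + 1)
    (hx : ∀ i, ContDiff ℝ 2 (x i))
    (hord : ∀ i, ∀ t ∈ Icc (0:ℝ) T, x i t < x (i + 1) t)
    (L : ℝ → ℝ) (hL : ContDiff ℝ 2 L)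
    (hL'' : ∀ u, 0 < deriv (deriv L) u)
    (G : ℝ → ℝ) (hG : ContDiffOn ℝ 1 G (Ioi 0))
    (hB : MonotoneOn (fun r => deriv G r * r ^ 2) (Ioi 0))
    (hEL : ∀ i, ∀ t ∈ Icc (0:ℝ) T,
      deriv (deriv L) (deriv (x i) t) * deriv (deriv (x i)) t =
        N * (deriv G (Rd N x (i + 1) t) * (Rd N x (i + 1) t) ^ 2
          - deriv G (Rd N x i t) * (Rd N x i t) ^ 2)) :
    ∀ p : ℝ, 1 ≤ p → ∀ t ∈ Icc (0:ℝ) T,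
      ∑ i ∈ Finset.Icc (1:ℤ) (N:ℤ), (Rd N x i t) ^ p * (x i t - x (i - 1) t) ≤
        max (∑ i ∈ Finset.Icc (1:ℤ) (N:ℤ), (Rd N x i 0) ^ p * (x i 0 - x (i - 1) 0))
          (∑ i ∈ Finset.Icc (1:ℤ) (N:ℤ), (Rd N x i T) ^ p * (x i T - x (i - 1) T)) :=
  stmt_14_general N hN T x hper hx hord L hL'' G hB hEL
end
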